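/- Let k be a field and let r, m ≥ 1 be integers. Let f ∈ k[x₁, …, x_r, t] be a nonzero polynomial. Then there exist a nonzero polynomial h ∈ k[x₁, …, x_r] and an integer s₀ ≥ 1, depending only on f, such that for every integer s ≥ s₀, every field extension K of k, and every point g = (g₁, …, g_r) ∈ Kʳ with h(g) ≠ 0, the polynomial f(x₁ + t^{s(m+1)}·g₁, …, x_r + t^{s(m+1)}·g_r, t) ∈ K[x₁, …, x_r, t], regarded as a polynomial in t with coefficients in K[x₁, …, x_r], has leading coefficient equal to a nonzero element of K; equivalently, after multiplication by a unit of K it is monic in t, and in particular it gives an integral dependence relation of t over K[x₁, …, x_r] modulo itself. -/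

import Mathlib

/-!
Write a monomial of `f` as `c tᵉ xᵅ`. The translate sends it to `c tᵉ ∏ (xᵢ + gᵢ t^N)^αᵢ`, a
polynomial in `t` of degree at most `e + |α| N` whose coefficient in that degree is `c gᵅ`.
Once `N` exceeds every `t`-exponent of `f`, this weight orders the monomials of `f`
lexicographically by `(|α|, e)`. Hence the top coefficient in `t` of the translate is `h(g)`,
where `h` keeps the lex-maximal monomials of `f` and forgets their power of `t`.
-/

universe u

namespace Polynomial

variable {R ι : Type*} [CommSemiring R] {s : Finset ι} {p : ι → Polynomial R} {N : ℕ}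

theorem natDegree_C_add_C_mul_X_pow_le (a b : R) (N : ℕ) : (C a + C b * X ^ N).natDegree ≤ N := by
  compute_degree!

theorem natDegree_prod_pow_le_of_natDegree_le (n : ι → ℕ) (h : ∀ i ∈ s, (p i).natDegree ≤ N) :
    (∏ i ∈ s, p i ^ n i).natDegree ≤ (∑ i ∈ s, n i) * N := by
  rw [Finset.sum_mul]
  exact (natDegree_prod_le s _).trans <|
    Finset.sum_le_sum fun i hi => natDegree_pow_le_of_le _ (h i hi)

theorem coeff_prod_pow_of_natDegree_le (n : ι → ℕ) (h : ∀ i ∈ s, (p i).natDegree ≤ N) :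
    (∏ i ∈ s, p i ^ n i).coeff ((∑ i ∈ s, n i) * N) = ∏ i ∈ s, (p i).coeff N ^ n i := by
  classical
  induction s using Finset.induction with
  | empty => simp
  | insert a s ha ih =>
    have hs : ∀ i ∈ s, (p i).natDegree ≤ N := fun i hi => h i (Finset.mem_insert_of_mem hi)
    rw [Finset.prod_insert ha, Finset.sum_insert ha, Finset.prod_insert ha, add_mul,
      coeff_mul_add_eq_of_natDegree_le (natDegree_pow_le_of_le _ (h a (Finset.mem_insert_self a s)))
        (natDegree_prod_pow_le_of_natDegree_le n hs),
      coeff_pow_of_natDegree_le (h a (Finset.mem_insert_self a s)), ih hs]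

end Polynomial

namespace MvPolynomial

section TwistedTranslate

variable {σ R A : Type*} [CommSemiring R] [CommSemiring A] [Algebra R A]

noncomputable def twistedTranslate (N : ℕ) (g : σ → A) :
    MvPolynomial (Option σ) R →ₐ[R] Polynomial (MvPolynomial σ A) :=
  aeval fun o => o.elim Polynomial.X
    fun i => Polynomial.C (X i) + Polynomial.C (C (g i)) * Polynomial.X ^ N

theorem optionEquivLeft_aeval_eq_twistedTranslate (N : ℕ) (g : σ → A)
    (f : MvPolynomial (Option σ) R) :
    optionEquivLeft A σ (aeval (fun o : Option σ => o.elim (X none)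
      fun i => X (some i) + X none ^ N * C (g i)) f) = twistedTranslate N g f := by
  have : ((optionEquivLeft A σ).toAlgHom.restrictScalars R).comp
      (aeval fun o : Option σ => o.elim (X none) fun i => X (some i) + X none ^ N * C (g i)) =
      twistedTranslate N g := by
    refine algHom_ext fun o => ?_
    cases o with
    | none => simp [twistedTranslate, optionEquivLeft_X_none]
    | some i =>
      simp [twistedTranslate, optionEquivLeft_X_none, optionEquivLeft_X_some, optionEquivLeft_C]
  exact DFunLike.congr_fun this f

theorem twistedTranslate_monomial (N : ℕ) (g : σ → A) (μ : Option σ →₀ ℕ) (c : R) :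
    twistedTranslate N g (monomial μ c) = Polynomial.C (C (algebraMap R A c)) *
      (Polynomial.X ^ μ none * ∏ i ∈ μ.some.support,
        (Polynomial.C (X i) + Polynomial.C (C (g i)) * Polynomial.X ^ N) ^ μ.some i) := by
  rw [twistedTranslate, aeval_monomial, Finsupp.prod_option_index _ _ (fun _ => pow_zero _)
    (fun _ _ _ => pow_add _ _ _)]
  rfl

theorem natDegree_twistedTranslate_monomial_le {N : ℕ} (g : σ → A) (μ : Option σ →₀ ℕ) (c : R) :
    (twistedTranslate N g (monomial μ c)).natDegree ≤ μ none + μ.some.degree * N := by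
  rw [twistedTranslate_monomial]
  exact (Polynomial.natDegree_C_mul_le _ _).trans <| Polynomial.natDegree_mul_le.trans <|
    add_le_add (Polynomial.natDegree_X_pow_le _) <|
      Polynomial.natDegree_prod_pow_le_of_natDegree_le _ fun _ _ =>
        Polynomial.natDegree_C_add_C_mul_X_pow_le _ _ N

theorem coeff_twistedTranslate_monomial {N : ℕ} (hN : N ≠ 0) (g : σ → A) (μ : Option σ →₀ ℕ)
    (c : R) : (twistedTranslate N g (monomial μ c)).coeff (μ none + μ.some.degree * N) =
      C (aeval g (monomial μ.some c)) := by
  have hdeg : ∀ i ∈ μ.some.support,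
      (Polynomial.C (X i) + Polynomial.C (C (g i)) * Polynomial.X ^ N).natDegree ≤ N :=
    fun _ _ => Polynomial.natDegree_C_add_C_mul_X_pow_le _ _ N
  rw [twistedTranslate_monomial, Polynomial.coeff_C_mul, Finsupp.degree_apply,
    Polynomial.coeff_mul_add_eq_of_natDegree_le (Polynomial.natDegree_X_pow_le _)
      (Polynomial.natDegree_prod_pow_le_of_natDegree_le _ hdeg),
    Polynomial.coeff_prod_pow_of_natDegree_le _ hdeg]
  simp [aeval_monomial, Finsupp.prod, hN, Polynomial.coeff_X_pow, Polynomial.coeff_C]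

end TwistedTranslate

section LeadingForm

variable {σ R : Type*} [CommSemiring R]

noncomputable def xtDegree (μ : Option σ →₀ ℕ) : ℕ ×ₗ ℕ := toLex (μ.some.degree, μ none)

theorem xtDegree_eq_iff {μ ν : Option σ →₀ ℕ} :
    xtDegree μ = xtDegree ν ↔ μ.some.degree = ν.some.degree ∧ μ none = ν none := by
  simp [xtDegree]

theorem eq_of_xtDegree_eq_of_some_eq {μ ν : Option σ →₀ ℕ} (h : xtDegree μ = xtDegree ν)
    (hs : μ.some = ν.some) : μ = ν := by
  ext (_ | i)
  · exact (xtDegree_eq_iff.mp h).2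
  · exact DFunLike.congr_fun hs i

theorem weight_lt_of_xtDegree_lt {μ ν : Option σ →₀ ℕ} {N : ℕ} (hμ : μ none < N)
    (h : xtDegree μ < xtDegree ν) : μ none + μ.some.degree * N < ν none + ν.some.degree * N := by
  rcases Prod.Lex.toLex_lt_toLex.mp h with hlt | ⟨heq, hlt⟩
  · calc μ none + μ.some.degree * N < (μ.some.degree + 1) * N := by linarith
      _ ≤ ν.some.degree * N := Nat.mul_le_mul_right N hlt
      _ ≤ _ := Nat.le_add_left _ _
  · simp only at heq hlt
    rw [heq]
    exact Nat.add_lt_add_right hlt _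

noncomputable def xtLeadingForm (f : MvPolynomial (Option σ) R) : MvPolynomial σ R :=
  ∑ μ ∈ f.support with xtDegree μ = f.support.sup xtDegree, monomial μ.some (f.coeff μ)

theorem xtLeadingForm_ne_zero {f : MvPolynomial (Option σ) R} (hf : f ≠ 0) :
    xtLeadingForm f ≠ 0 := by
  classical
  obtain ⟨μ, hμ, hμM⟩ := Finset.exists_mem_eq_sup f.support (support_nonempty.mpr hf) xtDegree
  suffices (xtLeadingForm f).coeff μ.some = f.coeff μ from
    fun h => mem_support_iff.mp hμ (by rw [← this, h, coeff_zero])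
  rw [xtLeadingForm, coeff_sum, Finset.sum_eq_single_of_mem μ (by simp [hμ, hμM])]
  · rw [coeff_monomial, if_pos rfl]
  · intro ν hν hne
    rw [coeff_monomial, if_neg]
    exact fun hs => hne (eq_of_xtDegree_eq_of_some_eq (by simp_all) hs)

end LeadingForm

theorem leadingCoeff_twistedTranslate {σ R A : Type*} [CommSemiring R] [CommSemiring A]
    [Algebra R A] {N : ℕ} {g : σ → A} {f : MvPolynomial (Option σ) R}
    (hN : ∀ μ ∈ f.support, μ none < N) (hg : aeval g (xtLeadingForm f) ≠ 0) :
    (twistedTranslate N g f).leadingCoeff = C (aeval g (xtLeadingForm f)) := by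
  classical
  have hf : f ≠ 0 := by rintro rfl; simp [xtLeadingForm] at hg
  obtain ⟨μ₀, hμ₀, hμ₀M⟩ := Finset.exists_mem_eq_sup f.support (support_nonempty.mpr hf) xtDegree
  set W := μ₀ none + μ₀.some.degree * N
  have hweight_lt : ∀ μ ∈ f.support, xtDegree μ ≠ xtDegree μ₀ →
      μ none + μ.some.degree * N < W := fun μ hμ hne =>
    weight_lt_of_xtDegree_lt (hN μ hμ) (lt_of_le_of_ne (hμ₀M ▸ Finset.le_sup hμ) hne)
  have hweight_eq : ∀ μ : Option σ →₀ ℕ, xtDegree μ = xtDegree μ₀ →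
      μ none + μ.some.degree * N = W := by
    intro μ h
    rw [(xtDegree_eq_iff.mp h).1, (xtDegree_eq_iff.mp h).2]
  have hsum : twistedTranslate N g f =
      ∑ μ ∈ f.support, twistedTranslate N g (monomial μ (f.coeff μ)) := by
    conv_lhs => rw [f.as_sum]
    exact map_sum _ _ _
  have hdeg : (twistedTranslate N g f).natDegree ≤ W := by
    rw [hsum]
    refine Polynomial.natDegree_sum_le_of_forall_le _ _ fun μ hμ => ?_
    refine (natDegree_twistedTranslate_monomial_le g μ _).trans ?_
    by_cases h : xtDegree μ = xtDegree μ₀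
    · exact (hweight_eq μ h).le
    · exact (hweight_lt μ hμ h).le
  have hcoeff : (twistedTranslate N g f).coeff W = C (aeval g (xtLeadingForm f)) := by
    rw [hsum, Polynomial.finsetSum_coeff, xtLeadingForm, map_sum, map_sum, Finset.sum_filter]
    refine Finset.sum_congr rfl fun μ hμ => ?_
    split_ifs with h
    · rw [← hweight_eq μ (h.trans hμ₀M), coeff_twistedTranslate_monomial
        (Nat.ne_zero_of_lt (hN μ hμ))]
    · exact Polynomial.coeff_eq_zero_of_natDegree_lt <|
        (natDegree_twistedTranslate_monomial_le g μ _).trans_lt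
          (hweight_lt μ hμ fun h' => h (h'.trans hμ₀M.symm))
  have hW : (twistedTranslate N g f).natDegree = W :=
    Polynomial.natDegree_eq_of_le_of_coeff_ne_zero hdeg
      (by rw [hcoeff]; exact (map_ne_zero_iff _ (C_injective σ A)).mpr hg)
  rw [Polynomial.leadingCoeff, hW, hcoeff]

end MvPolynomial

open MvPolynomial

theorem statement_12_general {k : Type u} [Field k] (r m : ℕ)
    (f : MvPolynomial (Option (Fin r)) k) (hf : f ≠ 0) :
    ∃ (h : MvPolynomial (Fin r) k) (s₀ : ℕ), h ≠ 0 ∧ 1 ≤ s₀ ∧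
      ∀ s : ℕ, s₀ ≤ s →
        ∀ (K : Type u) [Field K] [Algebra k K], ∀ g : Fin r → K,
          MvPolynomial.aeval g h ≠ 0 →
            ∃ c : K, c ≠ 0 ∧
              (MvPolynomial.optionEquivLeft K (Fin r)
                (MvPolynomial.aeval
                  (fun o : Option (Fin r) =>
                    o.elim (MvPolynomial.X none)
                      (fun i => MvPolynomial.X (some i) +
                        MvPolynomial.X none ^ (s * (m + 1)) * MvPolynomial.C (g i)))
                  f)).leadingCoeff = MvPolynomial.C c := by
  refine ⟨xtLeadingForm f, f.degreeOf none + 1, xtLeadingForm_ne_zero hf, le_add_self,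
    fun s hs K _ _ g hg => ⟨_, hg, ?_⟩⟩
  have hN : ∀ μ ∈ f.support, μ none < s * (m + 1) := fun μ hμ =>
    (monomial_le_degreeOf none hμ).trans_lt <|
      Nat.lt_of_lt_of_le hs (Nat.le_mul_of_pos_right s m.succ_pos)
  rw [optionEquivLeft_aeval_eq_twistedTranslate, leadingCoeff_twistedTranslate hN hg]

theorem statement_12 {k : Type u} [Field k] (r m : ℕ) (hr : 1 ≤ r) (hm : 1 ≤ m)
    (f : MvPolynomial (Option (Fin r)) k) (hf : f ≠ 0) :
    ∃ (h : MvPolynomial (Fin r) k) (s₀ : ℕ), h ≠ 0 ∧ 1 ≤ s₀ ∧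
      ∀ s : ℕ, s₀ ≤ s →
        ∀ (K : Type u) [Field K] [Algebra k K], ∀ g : Fin r → K,
          MvPolynomial.aeval g h ≠ 0 →
            ∃ c : K, c ≠ 0 ∧
              (MvPolynomial.optionEquivLeft K (Fin r)
                (MvPolynomial.aeval
                  (fun o : Option (Fin r) =>
                    o.elim (MvPolynomial.X none)
                      (fun i => MvPolynomial.X (some i) +
                        MvPolynomial.X none ^ (s * (m + 1)) * MvPolynomial.C (g i)))
                  f)).leadingCoeff = MvPolynomial.C c :=
  statement_12_general r m f hf
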